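/- Let m, n be positive integers and x₀ a real number with √(4 - 1/(mn)) < |x₀| ≤ 2. Define, for real y, t(y) = 2 + (y-2)(y+2-x₀²)·S_{m-1}(y)² and μ(y) = 1 + (y+2-x₀²)·S_{m-1}(y)·(S_m(y) - S_{m-1}(y)), and f(y) = S_n(t(y)) - μ(y)·S_{n-1}(t(y)). Then f has no real root y ≤ 2. -/
import Mathlib


open Real

/-- Chebyshev polynomials of the second kind, nonnegative indices. -/
noncomputable def Snat (z : ℝ) : ℕ → ℝ
  | 0 => 1
  | 1 => z
  | (n+2) => z * Snat z (n+1) - Snat z n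

/-- Chebyshev polynomials of the second kind, extended to all integer indices
by the recursion `S k = z * S (k-1) - S (k-2)` (so `S (-1) = 0`, `S (-k-2) = -S k`). -/
noncomputable def S (k : ℤ) (z : ℝ) : ℝ :=
  if 0 ≤ k then Snat z k.toNat
  else if k = -1 then 0 else -Snat z (-k - 2).toNat

lemma S_ofNat (k : ℕ) (z : ℝ) : S (k : ℤ) z = Snat z k := by
  simp [S]

lemma snat_rec (z : ℝ) (k : ℕ) : Snat z (k+2) = z * Snat z (k+1) - Snat z k := rfl

lemma snat_identity (z : ℝ) : ∀ k : ℕ,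
    Snat z (k+1) ^ 2 - z * Snat z (k+1) * Snat z k + Snat z k ^ 2 = 1 := by
  intro k
  induction k with
  | zero => show z ^ 2 - z * z * 1 + 1 ^ 2 = 1; ring
  | succ k ih =>
      rw [snat_rec]
      linear_combination ih

lemma snat_bound (z : ℝ) (hz : z ^ 2 ≤ 4) : ∀ k : ℕ,
    Snat z k ^ 2 ≤ ((k : ℝ) + 1) ^ 2 := by
  intro k
  induction k with
  | zero => norm_num [Snat]
  | succ k ih =>
      have hid := snat_identity z k
      have hC : (2 * Snat z (k+1) - z * Snat z k) ^ 2 ≤ 4 := by nlinarith [sq_nonneg (Snat z k)]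
      have hk : (0:ℝ) ≤ (k : ℝ) + 1 := by positivity
      push_cast
      nlinarith [sq_nonneg (z * Snat z k), sq_nonneg (2 * Snat z (k+1) - z * Snat z k),
        sq_nonneg (2 * Snat z (k+1) + z * Snat z k), sq_nonneg z, sq_nonneg (Snat z k)]

set_option maxHeartbeats 1000000 in
theorem J2m2n_no_root_le_two (m n : ℕ) (hm : 1 ≤ m) (hn : 1 ≤ n) (x₀ : ℝ)
    (hx1 : Real.sqrt (4 - 1 / (m * n)) < |x₀|) (hx2 : |x₀| ≤ 2)
    (t mu f : ℝ → ℝ)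
    (ht : ∀ y, t y = 2 + (y - 2) * (y + 2 - x₀ ^ 2) * S ((m : ℤ) - 1) y ^ 2)
    (hmu : ∀ y, mu y = 1 + (y + 2 - x₀ ^ 2) * S ((m : ℤ) - 1) y *
        (S m y - S ((m : ℤ) - 1) y))
    (hf : ∀ y, f y = S n (t y) - mu y * S ((n : ℤ) - 1) (t y)) :
    ∀ y : ℝ, y ≤ 2 → f y ≠ 0 := by
  intro y hy hf0
  obtain ⟨M, rfl⟩ : ∃ M, m = M + 1 := ⟨m - 1, (Nat.succ_pred_eq_of_pos hm).symm⟩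
  obtain ⟨N, rfl⟩ : ∃ N, n = N + 1 := ⟨n - 1, (Nat.succ_pred_eq_of_pos hn).symm⟩
  have hm1 : ((M + 1 : ℕ) : ℤ) - 1 = (M : ℤ) := by push_cast; ring
  have hn1 : ((N + 1 : ℕ) : ℤ) - 1 = (N : ℤ) := by push_cast; ring
  set s : ℝ := Snat y M with hs
  set u : ℝ := Snat y (M + 1) with hu
  set B : ℝ := Snat (t y) N with hB
  set A : ℝ := Snat (t y) (N + 1) with hA
  have hSm : S ((M + 1 : ℕ) : ℤ) y = u := S_ofNat (M+1) y
  have hSm1 : S (((M + 1 : ℕ) : ℤ) - 1) y = s := by rw [hm1]; exact S_ofNat M y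
  have hSn : S ((N + 1 : ℕ) : ℤ) (t y) = A := S_ofNat (N+1) (t y)
  have hSn1 : S (((N + 1 : ℕ) : ℤ) - 1) (t y) = B := by rw [hn1]; exact S_ofNat N (t y)
  have htv : t y = 2 + (y - 2) * (y + 2 - x₀ ^ 2) * s ^ 2 := by rw [ht y, hSm1]
  -- the key identity at a root of f
  have hkey : B ^ 2 * ((y + 2 - x₀ ^ 2) * s ^ 2 * (t y + 2 - x₀ ^ 2)) = 1 := by
    have hmuv : mu y = 1 + (y + 2 - x₀ ^ 2) * s * (u - s) := by rw [hmu y, hSm1, hSm]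
    have hfv : A - mu y * B = 0 := by rw [hf y, hSn, hSn1] at hf0; exact hf0
    have hAB : A = mu y * B := by linarith
    have hid_yn : u ^ 2 - y * u * s + s ^ 2 = 1 := snat_identity y M
    have hid_t : A ^ 2 - t y * A * B + B ^ 2 = 1 := snat_identity (t y) N
    rw [hAB, hmuv, htv] at hid_t
    rw [htv]
    linear_combination hid_t - B ^ 2 * (y + 2 - x₀ ^ 2) ^ 2 * s ^ 2 * hid_yn
  clear hf0 ht hmu hf hSm hSm1 hSn hSn1 hm hn hm1 hn1 hu hA
  -- basic inequalities on x₀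
  have hx0sq : x₀ ^ 2 ≤ 4 := by
    have h := abs_nonneg x₀
    nlinarith [sq_abs x₀, hx2]
  have hmnpos : (0:ℝ) < ((M:ℝ) + 1) * ((N:ℝ) + 1) := by positivity
  have hc : (0:ℝ) ≤ 4 - 1 / (((M+1:ℕ):ℝ) * ((N+1:ℕ):ℝ)) := by
    have h1 : 1 / (((M+1:ℕ):ℝ) * ((N+1:ℕ):ℝ)) ≤ 1 := by
      rw [div_le_one (by push_cast; positivity)]
      push_cast; nlinarith [Nat.cast_nonneg (α := ℝ) M, Nat.cast_nonneg (α := ℝ) N]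
    linarith
  have hx1sq : 4 - 1 / (((M:ℝ) + 1) * ((N:ℝ) + 1)) < x₀ ^ 2 := by
    have h2 := Real.sq_sqrt hc
    have h3 := Real.sqrt_nonneg (4 - 1 / (((M+1:ℕ):ℝ) * ((N+1:ℕ):ℝ)))
    have h4 : Real.sqrt (4 - 1 / (((M+1:ℕ):ℝ) * ((N+1:ℕ):ℝ))) ^ 2 < x₀ ^ 2 := by
      nlinarith [sq_abs x₀, hx1]
    rw [h2] at h4
    push_cast at h4
    exact h4
  clear hx1 hc
  have hε0 : (0:ℝ) ≤ 4 - x₀ ^ 2 := by linarith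
  have hε1 : (4 - x₀ ^ 2) * (((M:ℝ) + 1) * ((N:ℝ) + 1)) < 1 := by
    have h : 4 - x₀ ^ 2 < 1 / (((M:ℝ) + 1) * ((N:ℝ) + 1)) := by linarith
    calc (4 - x₀ ^ 2) * (((M:ℝ) + 1) * ((N:ℝ) + 1))
        < (1 / (((M:ℝ) + 1) * ((N:ℝ) + 1))) * (((M:ℝ) + 1) * ((N:ℝ) + 1)) :=
          mul_lt_mul_of_pos_right h hmnpos
      _ = 1 := by field_simp
  clear hx1sq
  rcases le_or_gt (y + 2 - x₀ ^ 2) 0 with ha | ha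
  · -- case a ≤ 0 : LHS of hkey is ≤ 0
    have hb : y - 2 ≤ 0 := by linarith
    have h1 : (0:ℝ) ≤ (y - 2) * (y + 2 - x₀ ^ 2) := by nlinarith
    have h2 : (0:ℝ) ≤ t y + 2 - x₀ ^ 2 := by
      rw [htv]
      nlinarith [mul_nonneg h1 (sq_nonneg s)]
    have h3 : (y + 2 - x₀ ^ 2) * s ^ 2 * (t y + 2 - x₀ ^ 2) ≤ 0 :=
      mul_nonpos_of_nonpos_of_nonneg (mul_nonpos_of_nonpos_of_nonneg ha (sq_nonneg s)) h2
    have h4 : B ^ 2 * ((y + 2 - x₀ ^ 2) * s ^ 2 * (t y + 2 - x₀ ^ 2)) ≤ 0 :=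
      mul_nonpos_of_nonneg_of_nonpos (sq_nonneg B) h3
    linarith
  · -- case a > 0 : quantitative bound
    have hb : y - 2 ≤ 0 := by linarith
    have hεlt1 : 4 - x₀ ^ 2 < 1 := by
      nlinarith [Nat.cast_nonneg (α := ℝ) M, Nat.cast_nonneg (α := ℝ) N]
    have hy2 : y ^ 2 ≤ 4 := by nlinarith
    have hsq : s ^ 2 ≤ ((M:ℝ) + 1) ^ 2 := snat_bound y hy2 M
    have hba : (2 - y) * (y + 2 - x₀ ^ 2) ≤ (4 - x₀ ^ 2) ^ 2 / 4 := by
      nlinarith [sq_nonneg ((y + 2 - x₀ ^ 2) - (2 - y))]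
    have hεm : (4 - x₀ ^ 2) * ((M:ℝ) + 1) < 1 := by
      nlinarith [Nat.cast_nonneg (α := ℝ) N, mul_nonneg hε0 (by positivity : (0:ℝ) ≤ (M:ℝ) + 1)]
    have h6 : (4 - x₀ ^ 2) ^ 2 * ((M:ℝ) + 1) ^ 2 ≤ 1 := by
      nlinarith [hεm, mul_nonneg hε0 (by positivity : (0:ℝ) ≤ (M:ℝ) + 1)]
    have h5 : (2 - y) * (y + 2 - x₀ ^ 2) * s ^ 2 ≤ ((4 - x₀ ^ 2) ^ 2 / 4) * ((M:ℝ) + 1) ^ 2 :=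
      mul_le_mul hba hsq (sq_nonneg s) (by positivity)
    have htm : (2 - y) * (y + 2 - x₀ ^ 2) * s ^ 2 ≤ 1 / 4 := by nlinarith [h5, h6]
    have htm0 : (0:ℝ) ≤ (2 - y) * (y + 2 - x₀ ^ 2) * s ^ 2 :=
      mul_nonneg (mul_nonneg (by linarith) (le_of_lt ha)) (sq_nonneg s)
    have htle : t y ≤ 2 := by rw [htv]; nlinarith [htm0]
    have htge : (7:ℝ)/4 ≤ t y := by rw [htv]; nlinarith [htm]
    have hty2 : t y ^ 2 ≤ 4 := by nlinarith [htle, htge]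
    have hBsq : B ^ 2 ≤ ((N:ℝ) + 1) ^ 2 := snat_bound (t y) hty2 N
    have hstep1 : (y + 2 - x₀ ^ 2) * s ^ 2 * (t y + 2 - x₀ ^ 2)
        ≤ (y + 2 - x₀ ^ 2) * s ^ 2 * (4 - x₀ ^ 2) := by
      apply mul_le_mul_of_nonneg_left _ (mul_nonneg (le_of_lt ha) (sq_nonneg s))
      rw [htv]; nlinarith [htm0]
    have has2 : (y + 2 - x₀ ^ 2) * s ^ 2 ≤ (4 - x₀ ^ 2) * ((M:ℝ) + 1) ^ 2 :=
      mul_le_mul (by linarith) hsq (sq_nonneg s) hε0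
    have hstep2 : (y + 2 - x₀ ^ 2) * s ^ 2 * (4 - x₀ ^ 2)
        ≤ (4 - x₀ ^ 2) * ((M:ℝ) + 1) ^ 2 * (4 - x₀ ^ 2) :=
      mul_le_mul_of_nonneg_right has2 hε0
    have hstep3 : B ^ 2 * ((y + 2 - x₀ ^ 2) * s ^ 2 * (t y + 2 - x₀ ^ 2))
        ≤ ((N:ℝ) + 1) ^ 2 * ((4 - x₀ ^ 2) * ((M:ℝ) + 1) ^ 2 * (4 - x₀ ^ 2)) := by
      rcases le_or_gt 0 ((y + 2 - x₀ ^ 2) * s ^ 2 * (t y + 2 - x₀ ^ 2)) with h | h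
      · exact mul_le_mul hBsq (le_trans hstep1 hstep2) h (by positivity)
      · have h7 : B ^ 2 * ((y + 2 - x₀ ^ 2) * s ^ 2 * (t y + 2 - x₀ ^ 2)) ≤ 0 :=
          mul_nonpos_of_nonneg_of_nonpos (sq_nonneg B) (le_of_lt h)
        have h0 : (0:ℝ) ≤ ((N:ℝ) + 1) ^ 2 * ((4 - x₀ ^ 2) * ((M:ℝ) + 1) ^ 2 * (4 - x₀ ^ 2)) := by
          positivity
        linarith
    have hfin : ((N:ℝ) + 1) ^ 2 * ((4 - x₀ ^ 2) * ((M:ℝ) + 1) ^ 2 * (4 - x₀ ^ 2)) < 1 := by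
      nlinarith [hε1, mul_nonneg hε0 (le_of_lt hmnpos)]
    linarith [hkey, hstep3, hfin]
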